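/- arXiv:2209.00938 — 4 statements merged into one kernel-verified Lean document; each statement's English description precedes it below -/
import Mathlib

section
/- For each real m ≥ 0 and all integers ξ, η ≥ 0: a₁(ξ−η+1, ξ+η+1, m, 1, u₁) = (−1)^{ξ+1} · m · (1+m²)^{δ₂(ξ(η+1))} · (1+m²)^{−(ξ+η)/2} · Σ_{j=0}^{⌊ξ/2⌋} C(⌊ξ/2⌋, j)·C(⌊(η−1)/2⌋, j)·(1 − (1+m²)²)^j. -/
open scoped BigOperators

/-- Direction of a checker move encoded by a Boolean: `true` = upwards-right
(vector `(ε,ε)`), `false` = upwards-left (vector `(-ε,ε)`). -/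
def dirZ (b : Bool) : ℤ := if b then 1 else -1

/-- The `k`-th direction of a path with `n` moves (dummy value `false` out of range). -/
def extd {n : ℕ} (d : Fin n → Bool) (k : ℕ) : Bool := if h : k < n then d ⟨k, h⟩ else false

/-- The (integer) space coordinate of a checker path after `k` moves. -/
def pathPos {n : ℕ} (d : Fin n → Bool) (k : ℕ) : ℤ := ∑ i ∈ Finset.range k, dirZ (extd d i)

/-- The number of turns of a checker path. -/
def pathTurns {n : ℕ} (d : Fin n → Bool) : ℕ :=
  ((Finset.range n).filter (fun k => 0 < k ∧ extd d (k - 1) ≠ extd d k)).card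

/-- Feynman checkers wave function `a(x,t,m,ε,u)` in an external field `u`, where the field
`u` is given as a function of the midpoint of an auxiliary edge. -/
noncomputable def kwf (m ε : ℝ) (u : ℝ → ℝ → ℝ) (x t : ℝ) : ℂ :=
  (((1 + m ^ 2 * ε ^ 2) ^ ((1 - t / ε) / 2) : ℝ) : ℂ) * Complex.I *
    ∑ d ∈ Finset.univ.filter
        (fun d : Fin ((⌊t / ε⌋).toNat) → Bool =>
          extd d 0 = true ∧ pathPos d ((⌊t / ε⌋).toNat) = ⌊x / ε⌋),
      (-(Complex.I) * (m * ε)) ^ (pathTurns d) *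
        ∏ k ∈ Finset.range ((⌊t / ε⌋).toNat),
          ((u (ε * pathPos d k + ε * (dirZ (extd d k)) / 2) (ε * k + ε / 2) : ℝ) : ℂ)

/-- `a₁(x,t,m,ε,u)`: the real part of the wave function. -/
noncomputable def ka1 (m ε : ℝ) (u : ℝ → ℝ → ℝ) (x t : ℝ) : ℝ := (kwf m ε u x t).re

/-- `a₂(x,t,m,ε,u)`: the imaginary part of the wave function. -/
noncomputable def ka2 (m ε : ℝ) (u : ℝ → ℝ → ℝ) (x t : ℝ) : ℝ := (kwf m ε u x t).im

/-- `P(x,t,m,ε,u)`: the probability to find the electron at `(x,t)`. -/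
noncomputable def kP (m ε : ℝ) (u : ℝ → ℝ → ℝ) (x t : ℝ) : ℝ := ‖kwf m ε u x t‖ ^ 2

/- The homogeneous electromagnetic field `u_ε`, as a function of the midpoint `(X,T)`
of an auxiliary edge: for `(x,t) ∈ εℤ²`, `u_ε(x+ε/2, t+ε/2) = -1` iff `(t-x)/(4ε) ∈ ℤ`. -/
open Classical in
noncomputable def uhom (ε : ℝ) : ℝ → ℝ → ℝ := fun X T =>
  if ∃ k : ℤ, T - X = 4 * ε * k then -1 else 1
/-- Extended binomial coefficient: `C(a,b) = 0` if `a < 0` or `b < 0`. -/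
def zchoose (a b : ℤ) : ℤ := if 0 ≤ a ∧ 0 ≤ b then (a.toNat).choose (b.toNat) else 0

/-- Bessel function of the first kind of order 0 (power series). -/
noncomputable def besselJ0 (z : ℝ) : ℝ :=
  ∑' j : ℕ, (-1 : ℝ) ^ j * (z / 2) ^ (2 * j) / ((j.factorial : ℝ)) ^ 2

/-- Bessel function of the first kind of order 1 (power series). -/
noncomputable def besselJ1 (z : ℝ) : ℝ :=
  ∑' j : ℕ, (-1 : ℝ) ^ j * (z / 2) ^ (2 * j + 1) / ((j.factorial : ℝ) * ((j + 1).factorial : ℝ))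

/-- Truncated hypergeometric sum `₂F₁(a,b;c;z)` with integer parameters,
summed for `k = 0, …, K`. -/
noncomputable def hypF (a b c : ℤ) (K : ℕ) (z : ℝ) : ℝ :=
  ∑ k ∈ Finset.range (K + 1),
    (∏ l ∈ Finset.range k, (((a + l) * (b + l) : ℤ) : ℝ) / (((1 + l) * (c + l) : ℤ) : ℝ)) * z ^ k

/-- `ω_p = (1/(2ε))·arcsin(sin(2pε)/(1+m²ε²))`. -/
noncomputable def omg (m ε p : ℝ) : ℝ :=
  (1 / (2 * ε)) * Real.arcsin (Real.sin (2 * p * ε) / (1 + m ^ 2 * ε ^ 2))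

/-- `(-1)^q` for a real exponent `q`, with the convention `(-1)^(n/2) = iⁿ`:
`neg1pow q = exp(iπq)`. -/
noncomputable def neg1pow (q : ℝ) : ℂ := Complex.exp (Complex.I * Real.pi * q)

/-- The Airy function `Ai(λ) = (1/π)·lim_{R→∞} ∫₀^R cos(y³/3 + λy) dy`. -/
noncomputable def AiryAi (lam : ℝ) : ℝ :=
  (1 / Real.pi) *
    Filter.limUnder Filter.atTop (fun R : ℝ => ∫ y in (0 : ℝ)..R, Real.cos (y ^ 3 / 3 + lam * y))

/-- The function `θ̃(v)` from Theorem `Airy` of the paper. -/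
noncomputable def thetaTilde (m ε v : ℝ) : ℝ :=
  (1 / (2 * ε)) *
    (|v| * Real.arccos (|v| * Real.sqrt ((1 + m ^ 2 * ε ^ 2) ^ 2 - 1) / Real.sqrt (1 - v ^ 2)) -
      Real.arccos (Real.sqrt ((1 + m ^ 2 * ε ^ 2) ^ 2 - 1) /
        ((1 + m ^ 2 * ε ^ 2) * Real.sqrt (1 - v ^ 2))))

/-!
Splitting the checker paths according to their last move gives, for `ε = 1` and any field `u`, the
discrete Dirac equations
`a₁(x, t+1) = r u(x+½, t+½) (a₁(x+1, t) + m a₂(x+1, t))` and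
`a₂(x, t+1) = r u(x-½, t+½) (a₂(x-1, t) - m a₁(x-1, t))`, where `r = (1+m²)^(-1/2)`.
In the light-cone coordinates `x = ξ - η + 1`, `t = ξ + η + 1` the homogeneous field contributes
the factor `1` to the first equation and `s = (-1)^(η+1)` to the second. Eliminating `a₂` leaves
`F(ξ+1, η+1) = r (F(ξ+1, η) + s F(ξ, η+1)) - s F(ξ, η)` for `F(ξ, η) = a₁(x, t)`, a recurrence that
determines `F` from its values `F(ξ, 0) = 0` and `F(0, η) = -m r^η` on the two light rays.
The closed form satisfies the same recurrence: dividing it by `m r^(ξ+η)` leaves a polynomial in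
`c = 1 + m²`, for which the recurrence is checked by the parities of `ξ` and `η`; the only
nontrivial case is a Pascal rule for `∑ⱼ C(p, j) C(q, j) zʲ` with `z = 1 - c²`.
-/

section Snoc

variable {n : ℕ} (d : Fin n → Bool) (b : Bool)

theorem extd_snoc_of_lt {k : ℕ} (hk : k < n) :
    extd (Fin.snoc d b : Fin (n + 1) → Bool) k = extd d k := by
  simp only [extd, hk, Nat.lt_succ_of_lt hk, dite_true]
  exact Fin.snoc_castSucc (α := fun _ => Bool) b d ⟨k, hk⟩

theorem extd_snoc_self : extd (Fin.snoc d b : Fin (n + 1) → Bool) n = b := by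
  simp only [extd, Nat.lt_succ_self, dite_true]
  exact Fin.snoc_last (α := fun _ => Bool) b d

theorem pathPos_snoc_of_le {k : ℕ} (hk : k ≤ n) :
    pathPos (Fin.snoc d b : Fin (n + 1) → Bool) k = pathPos d k :=
  Finset.sum_congr rfl fun i hi => by
    rw [extd_snoc_of_lt d b (lt_of_lt_of_le (Finset.mem_range.mp hi) hk)]

theorem pathPos_snoc_succ :
    pathPos (Fin.snoc d b : Fin (n + 1) → Bool) (n + 1) = pathPos d n + dirZ b := by
  rw [pathPos, Finset.sum_range_succ, extd_snoc_self, ← pathPos, pathPos_snoc_of_le d b le_rfl]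

theorem pathTurns_snoc (hn : 1 ≤ n) :
    pathTurns (Fin.snoc d b : Fin (n + 1) → Bool)
      = pathTurns d + if extd d (n - 1) = b then 0 else 1 := by
  have hinit : (Finset.range n).filter
      (fun k => 0 < k ∧ extd (Fin.snoc d b : Fin (n + 1) → Bool) (k - 1)
        ≠ extd (Fin.snoc d b : Fin (n + 1) → Bool) k)
      = (Finset.range n).filter (fun k => 0 < k ∧ extd d (k - 1) ≠ extd d k) :=
    Finset.filter_congr fun k hk => by
      have hk := Finset.mem_range.mp hk
      rw [extd_snoc_of_lt d b hk, extd_snoc_of_lt d b (by omega)]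
  rw [pathTurns, Finset.range_add_one, Finset.filter_insert, hinit,
    extd_snoc_of_lt d b (by omega), extd_snoc_self, pathTurns]
  by_cases h : extd d (n - 1) = b
  · simp [h]
  · rw [if_pos ⟨hn, h⟩, if_neg h, Finset.card_insert_of_notMem (by simp)]

end Snoc

noncomputable def pathWeight (m : ℝ) (u : ℝ → ℝ → ℝ) {n : ℕ} (d : Fin n → Bool) : ℂ :=
  (-Complex.I * m) ^ pathTurns d *
    ∏ k ∈ Finset.range n, (u (pathPos d k + dirZ (extd d k) / 2) (k + 1 / 2) : ℂ)

noncomputable def pathSum (m : ℝ) (u : ℝ → ℝ → ℝ) (n : ℕ) (x : ℤ) (b : Bool) : ℂ :=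
  ∑ d ∈ Finset.univ.filter (fun d : Fin n → Bool =>
      extd d 0 = true ∧ pathPos d n = x ∧ extd d (n - 1) = b), pathWeight m u d

section PathSum

variable (m : ℝ) (u : ℝ → ℝ → ℝ)

theorem pathWeight_snoc {n : ℕ} (hn : 1 ≤ n) (d : Fin n → Bool) (b : Bool) :
    pathWeight m u (Fin.snoc d b : Fin (n + 1) → Bool)
      = (if extd d (n - 1) = b then 1 else -Complex.I * m) *
        u (pathPos d n + dirZ b / 2) (n + 1 / 2) * pathWeight m u d := by
  have hprod : ∏ k ∈ Finset.range n, (u (pathPos (Fin.snoc d b : Fin (n + 1) → Bool) k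
        + dirZ (extd (Fin.snoc d b : Fin (n + 1) → Bool) k) / 2) (k + 1 / 2) : ℂ)
      = ∏ k ∈ Finset.range n, (u (pathPos d k + dirZ (extd d k) / 2) (k + 1 / 2) : ℂ) :=
    Finset.prod_congr rfl fun k hk => by
      have hk := Finset.mem_range.mp hk
      rw [pathPos_snoc_of_le d b hk.le, extd_snoc_of_lt d b hk]
  rw [pathWeight, pathTurns_snoc d b hn, Finset.prod_range_succ, hprod,
    pathPos_snoc_of_le d b le_rfl, extd_snoc_self, pathWeight]
  split_ifs <;> ring

theorem pathSum_succ_eq_sum_snoc {n : ℕ} (hn : 1 ≤ n) (x : ℤ) (b : Bool) :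
    pathSum m u (n + 1) x b
      = ∑ d ∈ Finset.univ.filter (fun d : Fin n → Bool =>
          extd d 0 = true ∧ pathPos d n = x - dirZ b),
        pathWeight m u (Fin.snoc d b : Fin (n + 1) → Bool) := by
  have hsnoc (p : Bool × (Fin n → Bool)) :
      Fin.snocEquiv (fun _ => Bool) p = Fin.snoc p.2 p.1 := rfl
  rw [pathSum, Finset.sum_filter, Finset.sum_filter,
    ← (Fin.snocEquiv fun _ => Bool).sum_comp, Fintype.sum_prod_type, Finset.sum_eq_single b]
  · refine Finset.sum_congr rfl fun d _ => ?_
    simp only [hsnoc, extd_snoc_of_lt d _ hn, pathPos_snoc_succ, Nat.add_sub_cancel,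
      extd_snoc_self, and_true]
    congr 1
    exact propext (and_congr_right fun _ => by omega)
  · intro b' _ hb'
    simp [hsnoc, extd_snoc_self, hb']
  · simp

theorem sum_ite_last_eq_pathSum {n : ℕ} (y : ℤ) (b : Bool) :
    ∑ d ∈ Finset.univ.filter (fun d : Fin n → Bool => extd d 0 = true ∧ pathPos d n = y),
        (if extd d (n - 1) = b then 1 else -Complex.I * m) * pathWeight m u d
      = pathSum m u n y b + -Complex.I * m * pathSum m u n y (!b) := by
  rw [pathSum, pathSum, Finset.mul_sum, Finset.sum_filter, Finset.sum_filter, Finset.sum_filter,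
    ← Finset.sum_add_distrib]
  refine Finset.sum_congr rfl fun d _ => ?_
  by_cases h : extd d 0 = true ∧ pathPos d n = y <;> cases b <;> cases extd d (n - 1) <;> simp [h]

theorem pathSum_succ {n : ℕ} (hn : 1 ≤ n) (x : ℤ) (b : Bool) :
    pathSum m u (n + 1) x b
      = u (x - dirZ b / 2) (n + 1 / 2) *
        (pathSum m u n (x - dirZ b) b + -Complex.I * m * pathSum m u n (x - dirZ b) (!b)) := by
  rw [pathSum_succ_eq_sum_snoc m u hn, ← sum_ite_last_eq_pathSum, Finset.mul_sum]
  refine Finset.sum_congr rfl fun d hd => ?_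
  rw [pathWeight_snoc m u hn, (Finset.mem_filter.mp hd).2.2]
  push_cast
  ring_nf

theorem pathSum_one (x : ℤ) (b : Bool) :
    pathSum m u 1 x b = if x = 1 ∧ b = true then (u (1 / 2) (1 / 2) : ℂ) else 0 := by
  rw [pathSum, Finset.sum_filter, ← (Equiv.funUnique (Fin 1) Bool).symm.sum_comp,
    Fintype.sum_bool]
  rcases eq_or_ne x 1 with rfl | hx <;> cases b <;>
    simp [extd, pathPos, pathWeight, pathTurns, dirZ, Equiv.funUnique, Finset.filter_singleton, *,
      Ne.symm]

/-- Paths ending with an up-right move make an even number of turns, so their weights are real;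
those ending with an up-left move make an odd number, so their weights are imaginary. -/
theorem pathSum_true_im_and_false_re {n : ℕ} (hn : 1 ≤ n) (x : ℤ) :
    (pathSum m u n x true).im = 0 ∧ (pathSum m u n x false).re = 0 := by
  induction n, hn using Nat.le_induction generalizing x with
  | base => simp only [pathSum_one]; split_ifs <;> simp_all
  | succ n hn ih =>
    rw [pathSum_succ m u hn, pathSum_succ m u hn]
    simp [Complex.mul_re, Complex.mul_im, (ih _).1, (ih _).2]

theorem pathSum_eq_zero_of_lt {n : ℕ} (hn : 1 ≤ n) {x : ℤ} (hx : n < x) (b : Bool) :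
    pathSum m u n x b = 0 := by
  induction n, hn using Nat.le_induction generalizing x b with
  | base => rw [pathSum_one, if_neg (by omega)]
  | succ n hn ih =>
    have hb : dirZ b ≤ 1 := by cases b <;> simp [dirZ]
    rw [pathSum_succ m u hn, ih (by push_cast at hx; omega), ih (by push_cast at hx; omega)]
    simp

theorem pathSum_eq_zero_of_add_lt_two {n : ℕ} (hn : 1 ≤ n) {x : ℤ} (hx : x + n < 2) (b : Bool) :
    pathSum m u n x b = 0 := by
  induction n, hn using Nat.le_induction generalizing x b with
  | base => rw [pathSum_one, if_neg (by omega)]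
  | succ n hn ih =>
    have hb : -1 ≤ dirZ b := by cases b <;> simp [dirZ]
    rw [pathSum_succ m u hn, ih (by push_cast at hx; omega), ih (by push_cast at hx; omega)]
    simp

theorem pathSum_self_false {n : ℕ} (hn : 1 ≤ n) : pathSum m u n n false = 0 := by
  rcases hn.eq_or_lt with rfl | hn
  · simp [pathSum_one]
  · obtain ⟨k, hk, rfl⟩ : ∃ k, 1 ≤ k ∧ n = k + 1 := ⟨n - 1, by omega, by omega⟩
    rw [pathSum_succ m u hk, show dirZ false = -1 from rfl,
      pathSum_eq_zero_of_lt m u hk (by omega), pathSum_eq_zero_of_lt m u hk (by omega)]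
    simp

theorem pathSum_true_of_add_eq_two {n : ℕ} (hn : 2 ≤ n) {x : ℤ} (hx : x + n = 2) :
    pathSum m u n x true = 0 := by
  obtain ⟨k, hk, rfl⟩ : ∃ k, 1 ≤ k ∧ n = k + 1 := ⟨n - 1, by omega, by omega⟩
  rw [pathSum_succ m u hk, show dirZ true = 1 from rfl,
    pathSum_eq_zero_of_add_lt_two m u hk (by omega),
    pathSum_eq_zero_of_add_lt_two m u hk (by omega)]
  simp

theorem kwf_one_eq (n : ℕ) (x : ℤ) :
    kwf m 1 u x n = ((1 + m ^ 2) ^ ((1 - n : ℝ) / 2) : ℝ) * Complex.I *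
      (pathSum m u n x true + pathSum m u n x false) := by
  rw [kwf, show (⌊(n : ℝ) / 1⌋).toNat = n by simp]
  simp only [div_one, Int.floor_intCast, one_mul, one_pow, mul_one, Complex.ofReal_one]
  congr 1
  rw [← Finset.sum_filter_add_sum_filter_not _ (fun d => extd d (n - 1) = true)]
  simp only [Finset.filter_filter, Bool.not_eq_true, and_assoc, pathWeight, pathSum]

theorem ka1_one_eq {n : ℕ} (hn : 1 ≤ n) (x : ℤ) :
    ka1 m 1 u x n = -(1 + m ^ 2) ^ ((1 - n : ℝ) / 2) * (pathSum m u n x false).im := by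
  simp [ka1, kwf_one_eq, Complex.mul_re, (pathSum_true_im_and_false_re m u hn x).1]

theorem ka2_one_eq {n : ℕ} (hn : 1 ≤ n) (x : ℤ) :
    ka2 m 1 u x n = (1 + m ^ 2) ^ ((1 - n : ℝ) / 2) * (pathSum m u n x true).re := by
  simp [ka2, kwf_one_eq, Complex.mul_im, (pathSum_true_im_and_false_re m u hn x).2]

theorem one_add_sq_rpow_succ (n : ℕ) :
    (1 + m ^ 2) ^ ((1 - (n + 1 : ℕ) : ℝ) / 2)
      = (1 + m ^ 2) ^ (-(1 / 2 : ℝ)) * (1 + m ^ 2) ^ ((1 - n : ℝ) / 2) := by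
  rw [← Real.rpow_add (by positivity)]
  congr 1
  push_cast
  ring

theorem ka1_one_succ {n : ℕ} (hn : 1 ≤ n) (x : ℤ) :
    ka1 m 1 u x (n + 1 : ℕ) = (1 + m ^ 2) ^ (-(1 / 2 : ℝ)) * u (x + 1 / 2) (n + 1 / 2) *
      (ka1 m 1 u (x + 1 : ℤ) n + m * ka2 m 1 u (x + 1 : ℤ) n) := by
  have hT := (pathSum_true_im_and_false_re m u hn (x + 1)).1
  have hx : (x : ℝ) - ((-1 : ℤ) : ℝ) / 2 = x + 1 / 2 := by push_cast; ring
  rw [ka1_one_eq m u (by omega), pathSum_succ m u hn, show dirZ false = -1 from rfl, hx,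
    sub_neg_eq_add, Bool.not_false, Complex.im_ofReal_mul, Complex.add_im, Complex.mul_im,
    ka1_one_eq m u hn, ka2_one_eq m u hn, one_add_sq_rpow_succ]
  simp only [Complex.mul_re, Complex.mul_im, Complex.neg_re, Complex.neg_im, Complex.I_re,
    Complex.I_im, Complex.ofReal_re, Complex.ofReal_im, hT]
  ring

theorem ka2_one_succ {n : ℕ} (hn : 1 ≤ n) (x : ℤ) :
    ka2 m 1 u x (n + 1 : ℕ) = (1 + m ^ 2) ^ (-(1 / 2 : ℝ)) * u (x - 1 / 2) (n + 1 / 2) *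
      (ka2 m 1 u (x - 1 : ℤ) n - m * ka1 m 1 u (x - 1 : ℤ) n) := by
  have hF := (pathSum_true_im_and_false_re m u hn (x - 1)).2
  rw [ka2_one_eq m u (by omega), pathSum_succ m u hn, show dirZ true = 1 from rfl,
    Bool.not_true, Complex.re_ofReal_mul, Complex.add_re, Complex.mul_re,
    ka1_one_eq m u hn, ka2_one_eq m u hn, one_add_sq_rpow_succ]
  simp only [Complex.mul_re, Complex.mul_im, Complex.neg_re, Complex.neg_im, Complex.I_re,
    Complex.I_im, Complex.ofReal_re, Complex.ofReal_im, hF]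
  push_cast
  ring

end PathSum

theorem uhom_one_apply {X T : ℝ} {z : ℤ} (h : T - X = z) :
    uhom 1 X T = if (4 : ℤ) ∣ z then -1 else 1 := by
  have hdvd : (∃ k : ℤ, T - X = 4 * 1 * k) ↔ (4 : ℤ) ∣ z := by
    rw [h]
    exact ⟨fun ⟨k, hk⟩ => ⟨k, by rw [mul_one] at hk; exact_mod_cast hk⟩,
      fun ⟨k, hk⟩ => ⟨k, by rw [hk]; push_cast; ring⟩⟩
  simp only [uhom, hdvd]

theorem uhom_one_of_sub_eq_two_mul {X T : ℝ} {η : ℕ} (h : T - X = 2 * η) :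
    uhom 1 X T = (-1) ^ (η + 1) := by
  rw [uhom_one_apply (z := 2 * η) (by exact_mod_cast h)]
  rcases Nat.even_or_odd η with he | ho
  · rw [if_pos (by obtain ⟨k, rfl⟩ := he; exact ⟨k, by push_cast; ring⟩), he.add_one.neg_one_pow]
  · rw [if_neg (by obtain ⟨k, rfl⟩ := ho; omega), ho.add_one.neg_one_pow]

theorem uhom_one_of_sub_eq_two_mul_add_one {X T : ℝ} {η : ℕ} (h : T - X = 2 * η + 1) :
    uhom 1 X T = 1 := by
  rw [uhom_one_apply (z := 2 * η + 1) (by exact_mod_cast h), if_neg (by omega)]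

theorem zchoose_natCast (n k : ℕ) : zchoose n k = n.choose k := by
  simp [zchoose]

theorem zchoose_of_neg {a : ℤ} (ha : a < 0) (b : ℤ) : zchoose a b = 0 := by
  simp [zchoose, ha.not_ge]

theorem zchoose_add_one_add_one {a : ℤ} (ha : -1 ≤ a) (k : ℕ) :
    zchoose (a + 1) (k + 1) = zchoose a k + zchoose a (k + 1) := by
  obtain rfl | ha := ha.eq_or_lt
  · simp [zchoose]
  · lift a to ℕ using (by omega)
    rw [show (a : ℤ) + 1 = (a + 1 : ℕ) by push_cast; ring,
      show (k : ℤ) + 1 = (k + 1 : ℕ) by push_cast; ring,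
      zchoose_natCast, zchoose_natCast, zchoose_natCast, Nat.choose_succ_succ]
    push_cast
    ring

noncomputable def binomProdSum (z : ℝ) (p : ℕ) (q : ℤ) : ℝ :=
  ∑ j ∈ Finset.range (p + 1), (p.choose j : ℝ) * zchoose q j * z ^ j

section BinomProdSum

variable (z : ℝ) (p : ℕ)

theorem binomProdSum_of_neg {q : ℤ} (hq : q < 0) : binomProdSum z p q = 0 := by
  simp [binomProdSum, zchoose_of_neg hq]

theorem binomProdSum_zero_left {q : ℤ} (hq : 0 ≤ q) : binomProdSum z 0 q = 1 := by
  simp [binomProdSum, zchoose, hq]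

theorem binomProdSum_succ_left (q : ℤ) :
    binomProdSum z (p + 1) q = binomProdSum z p q
      + z * ∑ j ∈ Finset.range (p + 1), (p.choose j : ℝ) * zchoose q (j + 1) * z ^ j := by
  have h := Finset.sum_choose_succ_mul (fun i _ => (zchoose q i : ℝ) * z ^ i) p
  simp only [binomProdSum, Finset.mul_sum, mul_assoc] at h ⊢
  push_cast at h
  rw [h]
  congr 1
  exact Finset.sum_congr rfl fun j _ => by ring

theorem binomProdSum_pascal {q : ℤ} (hq : 0 ≤ q) :
    binomProdSum z (p + 1) q = binomProdSum z (p + 1) (q - 1) + binomProdSum z p q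
      - (1 - z) * binomProdSum z p (q - 1) := by
  have hpascal : ∑ j ∈ Finset.range (p + 1), (p.choose j : ℝ) * zchoose q (j + 1) * z ^ j
      = ∑ j ∈ Finset.range (p + 1), (p.choose j : ℝ) * zchoose (q - 1) (j + 1) * z ^ j
        + binomProdSum z p (q - 1) := by
    rw [binomProdSum, ← Finset.sum_add_distrib]
    refine Finset.sum_congr rfl fun j _ => ?_
    rw [show q = q - 1 + 1 by ring, zchoose_add_one_add_one (by omega)]
    push_cast
    ring_nf
  rw [binomProdSum_succ_left, binomProdSum_succ_left, hpascal]
  ring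

end BinomProdSum

noncomputable def conePoly (c : ℝ) (ξ η : ℕ) : ℝ :=
  (-1) ^ (ξ + 1) * c ^ (ξ * (η + 1) % 2) * binomProdSum (1 - c ^ 2) (ξ / 2) ((η - 1 : ℤ) / 2)

section ConePoly

variable (c : ℝ)

theorem conePoly_zero_right (ξ : ℕ) : conePoly c ξ 0 = 0 := by
  simp [conePoly, binomProdSum_of_neg]

theorem conePoly_zero_succ (η : ℕ) : conePoly c 0 (η + 1) = -1 := by
  simp only [conePoly, binomProdSum_zero_left _ (by omega : (0 : ℤ) ≤ ((η + 1 : ℕ) - 1 : ℤ) / 2)]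
  simp

variable (p q : ℕ)

theorem conePoly_even_even :
    conePoly c (2 * p) (2 * q) = -binomProdSum (1 - c ^ 2) p (q - 1) := by
  simp [conePoly, pow_succ, pow_mul, Nat.mul_mod, show ((2 * q : ℤ) - 1) / 2 = q - 1 by omega]

theorem conePoly_even_odd :
    conePoly c (2 * p) (2 * q + 1) = -binomProdSum (1 - c ^ 2) p q := by
  simp [conePoly, pow_succ, pow_mul, Nat.mul_mod]

theorem conePoly_odd_even :
    conePoly c (2 * p + 1) (2 * q) = c * binomProdSum (1 - c ^ 2) p (q - 1) := by
  simp [conePoly, pow_succ, pow_mul, Nat.mul_mod, Nat.add_mod,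
    show ((2 * q : ℤ) - 1) / 2 = q - 1 by omega, show (2 * p + 1) / 2 = p by omega]

theorem conePoly_odd_odd :
    conePoly c (2 * p + 1) (2 * q + 1) = binomProdSum (1 - c ^ 2) p q := by
  simp [conePoly, pow_succ, pow_mul, Nat.mul_mod, Nat.add_mod, show (2 * p + 1) / 2 = p by omega]

end ConePoly

theorem conePoly_succ_succ (c : ℝ) (a b : ℕ) :
    conePoly c (a + 1) (b + 1)
      = conePoly c (a + 1) b + (-1) ^ (b + 1) * conePoly c a (b + 1)
        - (-1) ^ (b + 1) * c * conePoly c a b := by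
  obtain ⟨p, rfl | rfl⟩ := Nat.even_or_odd' a <;> obtain ⟨q, rfl | rfl⟩ := Nat.even_or_odd' b
  · rw [conePoly_odd_odd, conePoly_odd_even, conePoly_even_odd, conePoly_even_even,
      (odd_two_mul_add_one q).neg_one_pow]
    ring
  · rw [show 2 * q + 1 + 1 = 2 * (q + 1) by ring, conePoly_odd_even, conePoly_odd_odd,
      conePoly_even_even, conePoly_even_odd, (even_two_mul (q + 1)).neg_one_pow, Nat.cast_add_one, add_sub_cancel_right]
    ring
  · rw [show 2 * p + 1 + 1 = 2 * (p + 1) by ring, conePoly_even_odd, conePoly_even_even,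
      conePoly_odd_odd, conePoly_odd_even, (odd_two_mul_add_one q).neg_one_pow,
      binomProdSum_pascal _ _ (Nat.cast_nonneg q)]
    ring
  · rw [show 2 * p + 1 + 1 = 2 * (p + 1) by ring, show 2 * q + 1 + 1 = 2 * (q + 1) by ring,
      conePoly_even_even, conePoly_even_odd, conePoly_odd_even, conePoly_odd_odd,
      (even_two_mul (q + 1)).neg_one_pow, Nat.cast_add_one, add_sub_cancel_right]
    ring

theorem ext_of_axes_of_succ_succ {α : Type*} {f g : ℕ → ℕ → α} (R : ℕ → ℕ → α → α → α → α)
    (h_right : ∀ a, f a 0 = g a 0) (h_left : ∀ b, f 0 b = g 0 b)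
    (hf : ∀ a b, f (a + 1) (b + 1) = R a b (f (a + 1) b) (f a (b + 1)) (f a b))
    (hg : ∀ a b, g (a + 1) (b + 1) = R a b (g (a + 1) b) (g a (b + 1)) (g a b)) : f = g := by
  funext a b
  induction a generalizing b with
  | zero => exact h_left b
  | succ a iha =>
    induction b with
    | zero => exact h_right _
    | succ b ihb => rw [hf, hg, ihb, iha, iha]

theorem rpow_neg_half_sq_mul {c : ℝ} (hc : 0 < c) : (c ^ (-(1 / 2 : ℝ))) ^ 2 * c = 1 := by
  rw [← Real.rpow_natCast, ← Real.rpow_mul hc.le, show -(1 / 2 : ℝ) * (2 : ℕ) = -1 by norm_num,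
    Real.rpow_neg_one, inv_mul_cancel₀ hc.ne']

noncomputable def coneA1 (m : ℝ) (ξ η : ℕ) : ℝ :=
  ka1 m 1 (uhom 1) ((ξ - η + 1 : ℤ) : ℝ) ((ξ + η + 1 : ℕ) : ℝ)

noncomputable def coneA2 (m : ℝ) (ξ η : ℕ) : ℝ :=
  ka2 m 1 (uhom 1) ((ξ - η + 1 : ℤ) : ℝ) ((ξ + η + 1 : ℕ) : ℝ)

section Cone

variable (m : ℝ)

local notation "r" => (1 + m ^ 2) ^ (-(1 / 2 : ℝ))

theorem coneA1_succ_right (ξ η : ℕ) :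
    coneA1 m ξ (η + 1) = r * (coneA1 m ξ η + m * coneA2 m ξ η) := by
  have hu : uhom 1 (((ξ - η : ℤ) : ℝ) + 1 / 2) (((ξ + η + 1 : ℕ) : ℝ) + 1 / 2) = 1 :=
    uhom_one_of_sub_eq_two_mul_add_one (η := η) (by push_cast; ring)
  have hx : ((ξ : ℤ) - (η + 1 : ℕ) + 1) = ξ - η := by push_cast; ring
  rw [coneA1, hx, show ξ + (η + 1) + 1 = (ξ + η + 1) + 1 by ring,
    ka1_one_succ m _ (by omega), hu, mul_one]
  rfl

theorem coneA2_succ_left (ξ η : ℕ) :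
    coneA2 m (ξ + 1) η = r * (-1) ^ (η + 1) * (coneA2 m ξ η - m * coneA1 m ξ η) := by
  have hu : uhom 1 (((ξ + 1 - η + 1 : ℤ) : ℝ) - 1 / 2) (((ξ + η + 1 : ℕ) : ℝ) + 1 / 2)
      = (-1) ^ (η + 1) :=
    uhom_one_of_sub_eq_two_mul (by push_cast; ring)
  have hx : ((((ξ + 1 : ℕ) : ℤ) - η + 1) : ℤ) = ξ + 1 - η + 1 := by push_cast; ring
  rw [coneA2, hx, show ξ + 1 + η + 1 = (ξ + η + 1) + 1 by ring,
    ka2_one_succ m _ (by omega), hu, show (ξ : ℤ) + 1 - η + 1 - 1 = ξ - η + 1 by ring]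
  rfl

theorem coneA1_zero_right (ξ : ℕ) : coneA1 m ξ 0 = 0 := by
  rw [coneA1, ka1_one_eq m _ (by omega),
    show (ξ : ℤ) - (0 : ℕ) + 1 = (ξ + 1 : ℕ) by push_cast; ring, pathSum_self_false m _ (by omega)]
  simp

theorem coneA2_zero_left (η : ℕ) : coneA2 m 0 (η + 1) = 0 := by
  rw [coneA2, ka2_one_eq m _ (by omega),
    pathSum_true_of_add_eq_two m _ (by omega) (by push_cast; ring)]
  simp

theorem coneA2_zero_zero : coneA2 m 0 0 = -1 := by
  rw [coneA2, ka2_one_eq m _ le_rfl, pathSum_one, if_pos (by simp),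
    uhom_one_apply (z := 0) (by norm_num)]
  simp

theorem coneA1_zero_left (η : ℕ) : coneA1 m 0 (η + 1) = -m * r ^ (η + 1) := by
  induction η with
  | zero => rw [coneA1_succ_right, coneA1_zero_right, coneA2_zero_zero]; ring
  | succ η ih => rw [coneA1_succ_right, ih, coneA2_zero_left]; ring

theorem coneA1_succ_succ (ξ η : ℕ) :
    coneA1 m (ξ + 1) (η + 1)
      = r * (coneA1 m (ξ + 1) η + (-1) ^ (η + 1) * coneA1 m ξ (η + 1))
        - (-1) ^ (η + 1) * coneA1 m ξ η := by
  have hr := rpow_neg_half_sq_mul (c := 1 + m ^ 2) (by positivity)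
  rw [coneA1_succ_right, coneA2_succ_left, coneA1_succ_right m ξ η]
  linear_combination (-(-1) ^ (η + 1) * coneA1 m ξ η) * hr

theorem coneA1_eq (ξ η : ℕ) : coneA1 m ξ η = m * r ^ (ξ + η) * conePoly (1 + m ^ 2) ξ η := by
  have hr := rpow_neg_half_sq_mul (c := 1 + m ^ 2) (by positivity)
  refine congrFun (congrFun (ext_of_axes_of_succ_succ
    (g := fun ξ η => m * r ^ (ξ + η) * conePoly (1 + m ^ 2) ξ η)
    (fun _ b x y z => r * (x + (-1) ^ (b + 1) * y) - (-1) ^ (b + 1) * z) ?_ ?_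
    (coneA1_succ_succ m) fun a b => ?_) ξ) η
  · intro a
    rw [coneA1_zero_right, conePoly_zero_right, mul_zero]
  · rintro (_ | b)
    · rw [coneA1_zero_right, conePoly_zero_right, mul_zero]
    · rw [coneA1_zero_left, conePoly_zero_succ]
      ring
  · rw [conePoly_succ_succ]
    linear_combination (-(-1) ^ (b + 1) * m * r ^ (a + b) * conePoly (1 + m ^ 2) a b) * hr

end Cone

theorem exact_solution_a1_general (m : ℝ) (ξ η : ℕ) :
    ka1 m 1 (uhom 1) ((ξ : ℝ) - η + 1) ((ξ : ℝ) + η + 1)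
      = (-1 : ℝ) ^ (ξ + 1) * m * (1 + m ^ 2) ^ ((ξ * (η + 1)) % 2)
        * (1 + m ^ 2) ^ (-(((ξ : ℝ) + η) / 2))
        * ∑ j ∈ Finset.range (ξ / 2 + 1),
            (zchoose ((ξ : ℤ) / 2) (j : ℤ) : ℝ) * (zchoose ⌊((η : ℝ) - 1) / 2⌋ (j : ℤ) : ℝ)
              * (1 - (1 + m ^ 2) ^ 2) ^ j := by
  have hpow : (1 + m ^ 2) ^ (-(((ξ : ℝ) + η) / 2))
      = ((1 + m ^ 2) ^ (-(1 / 2 : ℝ))) ^ (ξ + η) := by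
    rw [← Real.rpow_natCast _ (ξ + η), ← Real.rpow_mul (by positivity)]
    push_cast
    ring_nf
  have hfloor : ⌊((η : ℝ) - 1) / 2⌋ = (η - 1 : ℤ) / 2 := by
    simpa using Int.floor_div_natCast ((η : ℝ) - 1) 2
  have h := coneA1_eq m ξ η
  rw [coneA1, conePoly, binomProdSum] at h
  push_cast at h
  rw [h, hpow, hfloor, show (ξ : ℤ) / 2 = (ξ / 2 : ℕ) by omega]
  simp only [zchoose_natCast, Int.cast_natCast]
  ring

/-- Proposition (exact solution, first component). -/
theorem exact_solution_a1 (m : ℝ) (hm : 0 ≤ m) (ξ η : ℕ) :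
    ka1 m 1 (uhom 1) ((ξ : ℝ) - η + 1) ((ξ : ℝ) + η + 1)
      = (-1 : ℝ) ^ (ξ + 1) * m * (1 + m ^ 2) ^ ((ξ * (η + 1)) % 2)
        * (1 + m ^ 2) ^ (-(((ξ : ℝ) + η) / 2))
        * ∑ j ∈ Finset.range (ξ / 2 + 1),
            (zchoose ((ξ : ℤ) / 2) (j : ℤ) : ℝ) * (zchoose ⌊((η : ℝ) - 1) / 2⌋ (j : ℤ) : ℝ)
              * (1 - (1 + m ^ 2) ^ 2) ^ j :=
  exact_solution_a1_general m ξ η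
end

section
/- For each real m ≥ 0 and all integers ξ ≥ 0, η ≥ 1, setting z := 1 − (1+m²)²: a₁(ξ−η+1, ξ+η+1, m, 1, u₁) = (−1)^{ξ+1} · m · (1+m²)^{−(ξ+η)/2 + δ₂((1+η)ξ)} · ₂F₁(−⌊(η−1)/2⌋, −⌊ξ/2⌋; 1; z). -/
open scoped BigOperators

/-!
Split the path sum according to the direction of the last move. Paths start with a right move, so
those ending with a left move have an odd number of turns: the two partial sums are `P` and
`-i m Q` with `P, Q` real, and up to the factor `(1 + m²)^((1 - t)/2)` we get `a₁ = m Q`. In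
light-cone coordinates `(ξ, η)` the lattice Dirac equation in the field `u₁` reads
`Q(ξ, η+1) = P(ξ, η) + Q(ξ, η)` and `P(ξ+1, η) = ±(P(ξ, η) - m² Q(ξ, η))`, the sign being the
value of `u₁` on the edge. The claimed closed form for `Q`, built from
`₂F₁(-j, -q; 1; w) = ∑ₖ C(j,k) C(q,k) wᵏ`, satisfies the same equations by Pascal's rule in both
binomial coefficients, and both vanish outside the light cone.
-/

open Finset

namespace FeynmanCheckers

lemma sum_fun_succ_eq_sum_snoc {α M : Type*} [Fintype α] [AddCommMonoid M] {n : ℕ}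
    (f : (Fin (n + 1) → α) → M) :
    ∑ d, f d = ∑ b, ∑ d : Fin n → α, f (Fin.snoc d b) := by
  rw [← (Fin.snocEquiv fun _ => α).sum_comp, Fintype.sum_prod_type]
  rfl

section Snoc

variable {n : ℕ} (d : Fin n → Bool) (b : Bool)

lemma extd_snoc_of_lt {k : ℕ} (h : k < n) :
    extd (Fin.snoc d b : Fin (n + 1) → Bool) k = extd d k := by
  simp only [extd, h, Nat.lt_succ_of_lt h, dite_true]
  exact Fin.snoc_castSucc (α := fun _ => Bool) b d ⟨k, h⟩

lemma extd_snoc_self : extd (Fin.snoc d b : Fin (n + 1) → Bool) n = b := by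
  simp only [extd, Nat.lt_succ_self, dite_true]
  exact Fin.snoc_last (α := fun _ => Bool) b d

lemma pathPos_snoc_of_le {k : ℕ} (h : k ≤ n) :
    pathPos (Fin.snoc d b : Fin (n + 1) → Bool) k = pathPos d k :=
  sum_congr rfl fun i hi => by rw [extd_snoc_of_lt d b ((mem_range.mp hi).trans_le h)]

lemma pathPos_snoc_succ :
    pathPos (Fin.snoc d b : Fin (n + 1) → Bool) (n + 1) = pathPos d n + dirZ b := by
  rw [pathPos, sum_range_succ, extd_snoc_self, ← pathPos, pathPos_snoc_of_le d b le_rfl]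

lemma pathTurns_snoc :
    pathTurns (Fin.snoc d b : Fin (n + 1) → Bool)
      = pathTurns d + if 0 < n ∧ extd d (n - 1) ≠ b then 1 else 0 := by
  have hprefix : (range n).filter (fun k => 0 < k ∧
        extd (Fin.snoc d b : Fin (n + 1) → Bool) (k - 1)
          ≠ extd (Fin.snoc d b : Fin (n + 1) → Bool) k)
      = (range n).filter (fun k => 0 < k ∧ extd d (k - 1) ≠ extd d k) :=
    filter_congr fun k hk => by
      have hk := mem_range.mp hk
      rw [extd_snoc_of_lt d b hk, extd_snoc_of_lt d b ((k.sub_le 1).trans_lt hk)]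
  unfold pathTurns
  rw [range_add_one, filter_insert, extd_snoc_self, hprefix]
  rcases Nat.eq_zero_or_pos n with rfl | hn
  · simp
  · rw [extd_snoc_of_lt d b (Nat.sub_lt hn one_pos)]
    split_ifs <;> simp_all [card_insert_of_notMem]

end Snoc

lemma two_dvd_sub_pathPos {n : ℕ} (d : Fin n → Bool) (k : ℕ) :
    (2 : ℤ) ∣ k - pathPos d k := by
  induction k with
  | zero => simp [pathPos]
  | succ k ih =>
    rw [pathPos, sum_range_succ, ← pathPos]
    obtain ⟨c, hc⟩ := ih
    cases extd d k
    · exact ⟨c + 1, by simp only [dirZ]; push_cast; linarith⟩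
    · exact ⟨c, by simp only [dirZ]; push_cast; linarith⟩

/-- The value of `u₁` on the move from `(x, k)` in direction `b`. -/
noncomputable def fieldStep (x : ℤ) (k : ℕ) (b : Bool) : ℝ :=
  if b = true ∧ (4 : ℤ) ∣ k - x then -1 else 1

/-- Along a left move `t - x` at the midpoint is odd, so `u₁ = 1` there. -/
lemma uhom_one_midpoint (x : ℤ) (k : ℕ) (b : Bool) (hpar : (2 : ℤ) ∣ k - x) :
    uhom 1 ((x : ℝ) + (dirZ b : ℝ) / 2) ((k : ℝ) + 1 / 2) = fieldStep x k b := by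
  have hcast : ∀ z : ℤ, (∃ c : ℤ, (z : ℝ) = 4 * 1 * c) ↔ (4 : ℤ) ∣ z := fun z => by
    simp only [mul_one, dvd_def]
    exact exists_congr fun c => by exact_mod_cast Iff.rfl
  have hcond : (∃ c : ℤ, (k : ℝ) + 1 / 2 - ((x : ℝ) + (dirZ b : ℝ) / 2) = 4 * 1 * c)
      ↔ (b = true ∧ (4 : ℤ) ∣ k - x) := by
    cases b
    · rw [show (k : ℝ) + 1 / 2 - (x + (dirZ false : ℝ) / 2) = ((k - x + 1 : ℤ) : ℝ) by
          simp only [dirZ]; push_cast; ring, hcast]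
      obtain ⟨c, hc⟩ := hpar
      simp only [Bool.false_eq_true, false_and, iff_false]
      omega
    · rw [show (k : ℝ) + 1 / 2 - (x + (dirZ true : ℝ) / 2) = ((k - x : ℤ) : ℝ) by
        simp only [dirZ]; push_cast; ring, hcast]
      simp
  simp only [uhom, fieldStep, hcond]

noncomputable def pathWeight (m : ℝ) {n : ℕ} (d : Fin n → Bool) : ℂ :=
  (-Complex.I * m) ^ pathTurns d *
    ∏ k ∈ range n, ((fieldStep (pathPos d k) k (extd d k) : ℝ) : ℂ)

noncomputable def endSum (m : ℝ) (n : ℕ) (x : ℤ) (b : Bool) : ℂ :=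
  ∑ d ∈ univ.filter (fun d : Fin n → Bool =>
      extd d 0 = true ∧ pathPos d n = x ∧ extd d (n - 1) = b),
    pathWeight m d

lemma pathWeight_snoc (m : ℝ) {n : ℕ} (hn : 0 < n) (d : Fin n → Bool) (b : Bool) :
    pathWeight m (Fin.snoc d b : Fin (n + 1) → Bool)
      = (if extd d (n - 1) = b then 1 else -Complex.I * m) * fieldStep (pathPos d n) n b
        * pathWeight m d := by
  have hprod : ∀ k ∈ range n,
      ((fieldStep (pathPos (Fin.snoc d b : Fin (n + 1) → Bool) k) k
        (extd (Fin.snoc d b : Fin (n + 1) → Bool) k) : ℝ) : ℂ)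
        = fieldStep (pathPos d k) k (extd d k) := fun k hk => by
    rw [extd_snoc_of_lt d b (mem_range.mp hk), pathPos_snoc_of_le d b (mem_range.mp hk).le]
  rw [pathWeight, pathWeight, pathTurns_snoc, prod_range_succ, prod_congr rfl hprod,
    pathPos_snoc_of_le d b le_rfl, extd_snoc_self, pow_add]
  by_cases h : extd d (n - 1) = b <;> simp [h, hn] <;> ring

/-- The lattice Dirac equation in the field `u₁`. -/
lemma endSum_succ (m : ℝ) {n : ℕ} (hn : 0 < n) (x : ℤ) (b : Bool) :
    endSum m (n + 1) x b
      = fieldStep (x - dirZ b) n b *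
          (endSum m n (x - dirZ b) b + -Complex.I * m * endSum m n (x - dirZ b) (!b)) := by
  set S := univ.filter (fun d : Fin n → Bool => extd d 0 = true ∧ pathPos d n = x - dirZ b)
  have hlast : ∀ c,
      endSum m n (x - dirZ b) c = ∑ d ∈ S.filter (extd · (n - 1) = c), pathWeight m d :=
    fun c => by rw [endSum, filter_filter]; simp only [and_assoc]
  have hsnoc :
      endSum m (n + 1) x b = ∑ d ∈ S, pathWeight m (Fin.snoc d b : Fin (n + 1) → Bool) := by
    rw [endSum, sum_filter, sum_fun_succ_eq_sum_snoc, Fintype.sum_bool, sum_filter]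
    simp only [Nat.add_sub_cancel, extd_snoc_of_lt _ _ hn, extd_snoc_self, pathPos_snoc_succ,
      eq_sub_iff_add_eq]
    cases b <;> simp
  rw [hsnoc, hlast, hlast, mul_add, mul_sum, mul_sum, mul_sum,
    ← sum_filter_add_sum_filter_not S (extd · (n - 1) = b)]
  congr 1
  · refine sum_congr rfl fun d hd => ?_
    rw [mem_filter] at hd
    rw [pathWeight_snoc m hn, if_pos hd.2, (mem_filter.mp hd.1).2.2, one_mul]
  · refine sum_congr (filter_congr fun d _ => by cases extd d (n - 1) <;> cases b <;> simp)
      fun d hd => ?_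
    rw [mem_filter] at hd
    rw [pathWeight_snoc m hn, if_neg (by simp [hd.2]), (mem_filter.mp hd.1).2.2]
    ring

lemma endSum_one (m : ℝ) (x : ℤ) (b : Bool) :
    endSum m 1 x b = if b = true ∧ x = 1 then -1 else 0 := by
  have hweight : ∀ (d : Fin 0 → Bool) c,
      pathWeight m (Fin.snoc d c : Fin 1 → Bool) = fieldStep 0 0 c :=
    fun d c => by
      rw [pathWeight, pathTurns_snoc, prod_range_one, extd_snoc_self (n := 0)]
      simp [pathTurns, pathPos]
  rw [endSum, sum_filter, sum_fun_succ_eq_sum_snoc]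
  simp only [extd_snoc_self (n := 0), pathPos_snoc_succ, hweight]
  cases b <;> by_cases hx : x = 1 <;> simp [hx, fieldStep, dirZ, pathPos, @eq_comm ℤ 1]

/-- The recursion `endSum_succ` with the factor `-i m` taken out of the second component. -/
noncomputable def ampPair (m : ℝ) : ℕ → ℤ → ℝ × ℝ
  | 0, _ => (0, 0)
  | 1, x => (if x = 1 then -1 else 0, 0)
  | n + 2, x =>
    (fieldStep (x - 1) (n + 1) true *
        ((ampPair m (n + 1) (x - 1)).1 - m ^ 2 * (ampPair m (n + 1) (x - 1)).2),
      (ampPair m (n + 1) (x + 1)).1 + (ampPair m (n + 1) (x + 1)).2)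

lemma endSum_eq_ampPair (m : ℝ) (n : ℕ) (hn : 0 < n) (x : ℤ) :
    endSum m n x true = (ampPair m n x).1 ∧
      endSum m n x false = -Complex.I * m * (ampPair m n x).2 := by
  induction n, hn using Nat.le_induction generalizing x with
  | base =>
    rw [endSum_one, endSum_one, ampPair]
    split_ifs <;> simp_all
  | succ n hn ih =>
    obtain ⟨k, rfl⟩ : ∃ k, n = k + 1 := ⟨n - 1, by omega⟩
    have hleft : fieldStep (x + 1) (k + 1) false = 1 := by simp [fieldStep]
    rw [endSum_succ m hn, endSum_succ m hn, ampPair]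
    simp only [dirZ, if_true, Bool.not_true, Bool.not_false, Bool.false_eq_true, if_false,
      sub_neg_eq_add, hleft, (ih _).1, (ih _).2]
    constructor
    · push_cast
      ring_nf
      rw [Complex.I_sq]
      ring
    · push_cast
      ring

lemma kwf_one_uhom (m : ℝ) (x : ℤ) (n : ℕ) :
    kwf m 1 (uhom 1) x n
      = ((1 + m ^ 2) ^ ((1 - n : ℝ) / 2) : ℝ) * Complex.I *
          (endSum m n x true + endSum m n x false) := by
  have hsummand : ∀ d : Fin n → Bool,
      (-Complex.I * m) ^ pathTurns d * ∏ k ∈ range n,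
        ((uhom 1 ((pathPos d k : ℝ) + ((dirZ (extd d k) : ℤ) : ℝ) / 2)
          ((k : ℝ) + 1 / 2) : ℝ) : ℂ)
        = pathWeight m d := fun d => by
    simp only [uhom_one_midpoint _ _ _ (two_dvd_sub_pathPos d _), pathWeight]
  have hn : (⌊(n : ℝ) / 1⌋).toNat = n := by simp
  rw [kwf, hn]
  simp only [div_one, Int.floor_intCast, one_pow, mul_one, one_mul, Complex.ofReal_one, hsummand]
  rw [← sum_filter_add_sum_filter_not _ (extd · (n - 1) = true), filter_filter, filter_filter,
    endSum, endSum]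
  simp only [Bool.not_eq_true, and_assoc]

lemma ka1_one_uhom (m : ℝ) (x : ℤ) {n : ℕ} (hn : 0 < n) :
    ka1 m 1 (uhom 1) x n = (1 + m ^ 2) ^ ((1 - n : ℝ) / 2) * (m * (ampPair m n x).2) := by
  obtain ⟨htrue, hfalse⟩ := endSum_eq_ampPair m n hn x
  rw [ka1, kwf_one_uhom, htrue, hfalse]
  simp

lemma ampPair_eq_zero (m : ℝ) {n : ℕ} {x : ℤ} (h : n < x ∨ x ≤ -n) :
    ampPair m n x = (0, 0) := by
  induction n using Nat.strong_induction_on generalizing x with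
  | _ n ih =>
    match n, ih with
    | 0, _ => rfl
    | 1, _ => simp [ampPair, show x ≠ 1 by omega]
    | k + 2, ih =>
      rw [ampPair, ih (k + 1) (by omega) (by omega), ih (k + 1) (by omega) (by omega)]
      simp

lemma fieldStep_right (ξ η : ℕ) :
    fieldStep ((ξ : ℤ) - η + 1) (ξ + η + 1) true = if Even η then -1 else 1 := by
  have h : (4 : ℤ) ∣ ((ξ + η + 1 : ℕ) : ℤ) - (ξ - η + 1) ↔ Even η := by
    rw [Nat.even_iff]
    push_cast
    omega
  simp only [fieldStep, true_and, h]

lemma cast_choose_succ_right (n k : ℕ) :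
    (n.choose (k + 1) : ℝ) = n.choose k * (n - k) / (k + 1) := by
  rcases le_or_gt k n with hk | hk
  · have h := congrArg (Nat.cast : ℕ → ℝ) (Nat.choose_succ_right_eq n k)
    push_cast [hk] at h
    field_simp
    linarith
  · simp [Nat.choose_eq_zero_of_lt hk, Nat.choose_eq_zero_of_lt (hk.trans k.lt_succ_self)]

/-- `₂F₁(-j, -q; 1; w) = ∑ₖ C(j,k) C(q,k) wᵏ`. -/
noncomputable def hyperSum (w : ℝ) (j q : ℕ) : ℝ :=
  ∑ k ∈ range (q + 1), (j.choose k * q.choose k : ℝ) * w ^ k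

lemma hypF_neg_neg_one (w : ℝ) (j q : ℕ) : hypF (-j) (-q) 1 q w = hyperSum w j q := by
  have hcoeff : ∀ k : ℕ, ∏ l ∈ range k, (((-(j : ℤ) + l) * (-(q : ℤ) + l) : ℤ) : ℝ)
      / (((1 + l) * (1 + l) : ℤ) : ℝ) = j.choose k * q.choose k := fun k => by
    induction k with
    | zero => simp
    | succ k ih =>
      rw [prod_range_succ, ih, cast_choose_succ_right j k, cast_choose_succ_right q k]
      push_cast
      field_simp
      ring
  simp only [hypF, hyperSum, hcoeff]

lemma hyperSum_eq_sum_range (w : ℝ) (j q : ℕ) {N : ℕ} (hN : q + 1 ≤ N) :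
    hyperSum w j q = ∑ k ∈ range N, (j.choose k * q.choose k : ℝ) * w ^ k :=
  sum_subset (range_subset_range.mpr hN) fun k _ hk => by
    simp [Nat.choose_eq_zero_of_lt (by simpa using hk : q < k)]

lemma hyperSum_zero_left (w : ℝ) (q : ℕ) : hyperSum w 0 q = 1 := by
  simp [hyperSum, sum_range_succ']

lemma hyperSum_zero_right (w : ℝ) (j : ℕ) : hyperSum w j 0 = 1 := by
  simp [hyperSum]

lemma hyperSum_succ_succ (w : ℝ) (j q : ℕ) :
    hyperSum w (j + 1) (q + 1)
      = hyperSum w j (q + 1) + hyperSum w (j + 1) q - (1 - w) * hyperSum w j q := by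
  have hdiff : hyperSum w (j + 1) (q + 1) - hyperSum w j (q + 1) - hyperSum w (j + 1) q
      + hyperSum w j q = ∑ k ∈ range (q + 2),
        (((j + 1).choose k - j.choose k) * ((q + 1).choose k - q.choose k) : ℝ) * w ^ k := by
    rw [hyperSum_eq_sum_range w (j + 1) q (N := q + 2) (by omega),
      hyperSum_eq_sum_range w j q (N := q + 2) (by omega), hyperSum, hyperSum,
      ← sum_sub_distrib, ← sum_sub_distrib, ← sum_add_distrib]
    exact sum_congr rfl fun k _ => by ring
  have hshift : ∑ k ∈ range (q + 2),
      (((j + 1).choose k - j.choose k) * ((q + 1).choose k - q.choose k) : ℝ) * w ^ k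
      = w * hyperSum w j q := by
    rw [sum_range_succ', hyperSum, mul_sum]
    simp only [Nat.choose_succ_succ, Nat.choose_zero_right]
    push_cast
    exact (add_eq_left.mpr (by ring)).trans (sum_congr rfl fun k _ => by ring)
  linarith

noncomputable def closedQ (m : ℝ) (ξ η : ℕ) : ℝ :=
  if η = 0 then 0 else
    (-1) ^ (ξ + 1) * (1 + m ^ 2) ^ ((1 + η) * ξ % 2) *
      hyperSum (1 - (1 + m ^ 2) ^ 2) ((η - 1) / 2) (ξ / 2)

section

variable (m : ℝ)

lemma closedQ_even_odd (r j : ℕ) :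
    closedQ m (2 * r) (2 * j + 1) = -hyperSum (1 - (1 + m ^ 2) ^ 2) j r := by
  simp [closedQ, Nat.mul_mod, Nat.add_mod, pow_add, pow_mul]

lemma closedQ_odd_odd (r j : ℕ) :
    closedQ m (2 * r + 1) (2 * j + 1) = hyperSum (1 - (1 + m ^ 2) ^ 2) j r := by
  simp [closedQ, Nat.mul_mod, Nat.add_mod, pow_add, pow_mul, show (2 * r + 1) / 2 = r by omega]

lemma closedQ_even_even (r j : ℕ) :
    closedQ m (2 * r) (2 * j + 2) = -hyperSum (1 - (1 + m ^ 2) ^ 2) j r := by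
  simp [closedQ, Nat.mul_mod, Nat.add_mod, pow_add, pow_mul, show (2 * j + 1) / 2 = j by omega]

lemma closedQ_odd_even (r j : ℕ) :
    closedQ m (2 * r + 1) (2 * j + 2) = (1 + m ^ 2) * hyperSum (1 - (1 + m ^ 2) ^ 2) j r := by
  simp [closedQ, Nat.mul_mod, Nat.add_mod, pow_add, pow_mul, show (2 * r + 1) / 2 = r by omega,
    show (2 * j + 1) / 2 = j by omega]

lemma closedQ_zero_right (ξ : ℕ) : closedQ m ξ 0 = 0 := if_pos rfl

lemma closedQ_one_right (ξ : ℕ) : closedQ m ξ 1 = (-1) ^ (ξ + 1) := by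
  simp [closedQ, hyperSum_zero_left]

lemma closedQ_zero_left {η : ℕ} (hη : η ≠ 0) : closedQ m 0 η = -1 := by
  simp [closedQ, hη, hyperSum_zero_right]

noncomputable def closedP (ξ η : ℕ) : ℝ := closedQ m ξ (η + 1) - closedQ m ξ η

lemma closedP_succ_left (ξ η : ℕ) :
    closedP m (ξ + 1) η
      = (if Even η then -1 else 1) * (closedP m ξ η - m ^ 2 * closedQ m ξ η) := by
  rcases η with _ | η
  · simp [closedP, closedQ_one_right, closedQ_zero_right, pow_succ]
  have hodd : ∀ j, ¬Even (2 * j + 1) := fun j => Nat.not_even_iff_odd.mpr (odd_two_mul_add_one j)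
  have heven : ∀ j, Even (2 * j + 1 + 1) := fun j => ⟨j + 1, by ring⟩
  obtain ⟨j, rfl | rfl⟩ : ∃ j, η = 2 * j ∨ η = 2 * j + 1 := ⟨η / 2, by omega⟩ <;>
  obtain ⟨r, rfl | rfl⟩ : ∃ r, ξ = 2 * r ∨ ξ = 2 * r + 1 := ⟨ξ / 2, by omega⟩ <;>
  simp only [closedP, hodd, heven, if_true, if_false, show 2 * j + 1 + 1 = 2 * j + 2 from rfl,
    show 2 * j + 1 + 1 + 1 = 2 * (j + 1) + 1 by ring, show 2 * r + 1 + 1 = 2 * (r + 1) by ring,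
    closedQ_even_odd, closedQ_odd_odd, closedQ_even_even, closedQ_odd_even]
  · ring
  · ring
  · ring
  · linear_combination -hyperSum_succ_succ (1 - (1 + m ^ 2) ^ 2) j r

lemma ampPair_eq_closed (ξ η : ℕ) :
    ampPair m (ξ + η + 1) (ξ - η + 1) = (closedP m ξ η, closedQ m ξ η) := by
  obtain ⟨N, hN⟩ : ∃ N, ξ + η = N := ⟨_, rfl⟩
  induction N generalizing ξ η with
  | zero =>
    obtain ⟨rfl, rfl⟩ : ξ = 0 ∧ η = 0 := by omega
    simp [ampPair, closedP, closedQ_one_right, closedQ_zero_right]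
  | succ N ih =>
    rw [hN, ampPair, Prod.mk.injEq]
    constructor
    · rcases ξ with _ | ξ
      · rw [ampPair_eq_zero m (by omega)]
        simp [closedP, closedQ_zero_left, show η ≠ 0 by omega]
      · rw [show ((ξ + 1 : ℕ) : ℤ) - η + 1 - 1 = ξ - η + 1 by push_cast; ring,
          show N + 1 = ξ + η + 1 by omega, ih ξ η (by omega), closedP_succ_left,
          fieldStep_right]
    · rcases η with _ | η
      · rw [ampPair_eq_zero m (by omega), closedQ_zero_right]
        simp
      · rw [show (ξ : ℤ) - (η + 1 : ℕ) + 1 + 1 = ξ - η + 1 by push_cast; ring,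
          show N + 1 = ξ + η + 1 by omega, ih ξ η (by omega), closedP]
        ring

end

end FeynmanCheckers

open FeynmanCheckers

theorem exact_solution_a1_hypergeometric_general (m : ℝ) (ξ η : ℕ) (hη : 1 ≤ η) :
    ka1 m 1 (uhom 1) ((ξ : ℝ) - η + 1) ((ξ : ℝ) + η + 1)
      = (-1 : ℝ) ^ (ξ + 1) * m
        * (1 + m ^ 2) ^ (-(((ξ : ℝ) + η) / 2) + ((((1 + η) * ξ) % 2 : ℕ) : ℝ))
        * hypF (-(((η - 1) / 2 : ℕ) : ℤ)) (-((ξ / 2 : ℕ) : ℤ)) 1 (ξ / 2)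
            (1 - (1 + m ^ 2) ^ 2) := by
  have hx : (ξ : ℝ) - η + 1 = ((ξ - η + 1 : ℤ) : ℝ) := by push_cast; ring
  have ht : (ξ : ℝ) + η + 1 = ((ξ + η + 1 : ℕ) : ℝ) := by push_cast; ring
  have hexp : -(((ξ : ℝ) + η) / 2) = (1 - ((ξ + η + 1 : ℕ) : ℝ)) / 2 := by push_cast; ring
  rw [hx, ht, ka1_one_uhom m _ (Nat.succ_pos _), ampPair_eq_closed, closedQ, if_neg (by omega),
    hypF_neg_neg_one, Real.rpow_add (by positivity), Real.rpow_natCast, hexp]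
  ring

/-- Proposition (hypergeometric form of the exact solution, first component). -/
theorem exact_solution_a1_hypergeometric (m : ℝ) (hm : 0 ≤ m) (ξ η : ℕ) (hη : 1 ≤ η) :
    ka1 m 1 (uhom 1) ((ξ : ℝ) - η + 1) ((ξ : ℝ) + η + 1)
      = (-1 : ℝ) ^ (ξ + 1) * m
        * (1 + m ^ 2) ^ (-(((ξ : ℝ) + η) / 2) + ((((1 + η) * ξ) % 2 : ℕ) : ℝ))
        * hypF (-(((η - 1) / 2 : ℕ) : ℤ)) (-((ξ / 2 : ℕ) : ℤ)) 1 (ξ / 2)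
            (1 - (1 + m ^ 2) ^ 2) :=
  exact_solution_a1_hypergeometric_general m ξ η hη
end

section
/- Let m, ε > 0 and set ω_p := (1/(2ε))·arcsin( sin(2pε)/(1+m²ε²) ). Then there exists a constant C = C(m,ε) > 0 such that for every real t > 0: | ∫_{−π/(4ε)}^{π/(4ε)} cos(2ω_p t) / cos²(2ω_p ε) dp | ≤ C·t^{−1/3}. -/
open scoped BigOperators

/-!
Substituting `x = 2pε` turns the integral into `ε⁻¹ ∫₀^{π/2} cos (k ψ) / cos² ψ` with `k = t / ε`,
`ψ x = arcsin (sin x / A)` and `A = 1 + m²ε² > 1`; the integrand is even. Since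
`ψ' = cos x / (A cos ψ)`, the integrand is `u · (sin (k ψ))'` with `u = A / (k cos x cos ψ)`, which
is nonnegative and increasing on `[0, π/2)`. Integrating by parts on `[0, π/2 - δ]` bounds that
piece by `2 u (π/2 - δ) = O(1 / (k δ))`, while the bounded integrand contributes `O(δ)` on the rest.
Choosing `δ = k^{-1/2}` gives decay `k^{-1/2}` for `k ≥ 1`; for `k < 1` the trivial bound suffices.
-/

open Real Set MeasureTheory intervalIntegral

theorem abs_integral_mul_deriv_le_of_deriv_nonneg {u u' v v' : ℝ → ℝ} {a b : ℝ} (hab : a ≤ b)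
    (hu : ContinuousOn u (Icc a b)) (hv : ContinuousOn v (Icc a b))
    (huu' : ∀ x ∈ Ioo a b, HasDerivAt u (u' x) x) (hvv' : ∀ x ∈ Ioo a b, HasDerivAt v (v' x) x)
    (hu' : ∀ x ∈ Ioo a b, 0 ≤ u' x) (hv' : IntervalIntegrable v' volume a b)
    (hv1 : ∀ x ∈ Icc a b, |v x| ≤ 1) (hua : 0 ≤ u a) :
    |∫ x in a..b, u x * v' x| ≤ 2 * u b := by
  have hu'i : IntervalIntegrable u' volume a b :=
    (intervalIntegrable_iff_integrableOn_Ioc_of_le hab).2 (integrableOn_deriv_of_nonneg hu huu' hu')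
  have hvc : ContinuousOn v (uIcc a b) := by rwa [uIcc_of_le hab]
  have hu'v : IntervalIntegrable (fun x => u' x * v x) volume a b := hu'i.mul_continuousOn hvc
  have hvar : ∫ x in a..b, u' x = u b - u a := integral_eq_sub_of_hasDerivAt_of_le hab hu huu' hu'i
  have hub : u a ≤ u b := by
    have hmono := integral_mono_on_of_le_Ioo hab intervalIntegrable_const hu'i hu'
    rw [intervalIntegral.integral_zero, hvar] at hmono
    linarith
  have hrem : |∫ x in a..b, u' x * v x| ≤ u b - u a := by
    rw [← hvar]
    refine (abs_integral_le_integral_abs hab).trans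
      (integral_mono_on_of_le_Ioo hab hu'v.abs hu'i fun x hx => ?_)
    rw [abs_mul, abs_of_nonneg (hu' x hx)]
    exact mul_le_of_le_one_right (hu' x hx) (hv1 x (Ioo_subset_Icc_self hx))
  have hend (x : ℝ) (hx : x ∈ Icc a b) (hux : 0 ≤ u x) : |u x * v x| ≤ u x := by
    rw [abs_mul, abs_of_nonneg hux]
    exact mul_le_of_le_one_right hux (hv1 x hx)
  rw [integral_mul_deriv_eq_deriv_mul_of_hasDerivAt (by rwa [uIcc_of_le hab]) hvc
    (by simpa [hab] using huu') (by simpa [hab] using hvv') hu'i hv']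
  have hendl := hend a (left_mem_Icc.2 hab) hua
  have hendr := hend b (right_mem_Icc.2 hab) (hua.trans hub)
  calc _ ≤ |u b * v b - u a * v a| + |∫ x in a..b, u' x * v x| := abs_sub _ _
    _ ≤ |u b * v b| + |u a * v a| + |∫ x in a..b, u' x * v x| := by gcongr; exact abs_sub _ _
    _ ≤ 2 * u b := by linarith

theorem integral_symmetric_eq_two_mul_of_even {f : ℝ → ℝ} {a : ℝ} (heven : ∀ x, f (-x) = f x)
    (hf : IntervalIntegrable f volume (-a) a) :
    ∫ x in -a..a, f x = 2 * ∫ x in 0..a, f x := by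
  have hneg : ∫ x in -a..0, f x = ∫ x in 0..a, f x := by
    simpa only [heven, neg_zero, neg_neg] using (integral_comp_neg (a := 0) (b := a) f).symm
  have h0 : (0 : ℝ) ∈ uIcc (-a) a := by
    rcases le_total 0 a with h | h <;> simp [h]
  rw [← integral_add_adjacent_intervals (hf.mono_set (uIcc_subset_uIcc_left h0))
    (hf.mono_set (uIcc_subset_uIcc_right h0)), hneg, two_mul]

/-- The paper's `ω_p` is `arcsinSinDiv (1 + m²ε²) (2pε) / (2ε)`. -/
noncomputable def arcsinSinDiv (A x : ℝ) : ℝ := arcsin (sin x / A)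

noncomputable def oscIntegrand (A k x : ℝ) : ℝ :=
  cos (k * arcsinSinDiv A x) / cos (arcsinSinDiv A x) ^ 2

section arcsinSinDiv

variable {A : ℝ}

lemma one_sub_inv_sq_pos (hA : 1 < A) : 0 < 1 - A⁻¹ ^ 2 := by
  have : A⁻¹ < 1 := inv_lt_one_of_one_lt₀ hA
  nlinarith [inv_pos.2 (zero_lt_one.trans hA)]

lemma abs_sin_div_lt_one (hA : 1 < A) (x : ℝ) : |sin x / A| < 1 := by
  rw [abs_div, abs_of_pos (zero_lt_one.trans hA), div_lt_one (zero_lt_one.trans hA)]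
  exact (abs_sin_le_one x).trans_lt hA

lemma sin_arcsinSinDiv (hA : 1 < A) (x : ℝ) : sin (arcsinSinDiv A x) = sin x / A := by
  have h := abs_lt.1 (abs_sin_div_lt_one hA x)
  exact sin_arcsin h.1.le h.2.le

lemma one_sub_inv_sq_le_cos_arcsinSinDiv_sq (hA : 1 < A) (x : ℝ) :
    1 - A⁻¹ ^ 2 ≤ cos (arcsinSinDiv A x) ^ 2 := by
  rw [cos_sq', sin_arcsinSinDiv hA, div_eq_mul_inv, mul_pow]
  nlinarith [sin_sq_le_one x, sq_nonneg A⁻¹]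

lemma one_sub_inv_sq_le_cos_arcsinSinDiv (hA : 1 < A) (x : ℝ) :
    1 - A⁻¹ ^ 2 ≤ cos (arcsinSinDiv A x) := by
  have h0 : 0 ≤ cos (arcsinSinDiv A x) := cos_arcsin_nonneg _
  nlinarith [one_sub_inv_sq_le_cos_arcsinSinDiv_sq hA x, cos_le_one (arcsinSinDiv A x)]

lemma cos_arcsinSinDiv_pos (hA : 1 < A) (x : ℝ) : 0 < cos (arcsinSinDiv A x) :=
  (one_sub_inv_sq_pos hA).trans_le (one_sub_inv_sq_le_cos_arcsinSinDiv hA x)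

lemma arcsinSinDiv_neg (x : ℝ) : arcsinSinDiv A (-x) = -arcsinSinDiv A x := by
  rw [arcsinSinDiv, arcsinSinDiv, sin_neg, neg_div, arcsin_neg]

lemma continuous_arcsinSinDiv : Continuous (arcsinSinDiv A) :=
  continuous_arcsin.comp (continuous_sin.div_const A)

lemma hasDerivAt_arcsinSinDiv (hA : 1 < A) (x : ℝ) :
    HasDerivAt (arcsinSinDiv A) (cos x / (A * cos (arcsinSinDiv A x))) x := by
  have h := abs_lt.1 (abs_sin_div_lt_one hA x)
  refine ((hasDerivAt_arcsin h.1.ne' h.2.ne).comp x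
    ((hasDerivAt_sin x).div_const A)).congr_deriv ?_
  rw [← cos_arcsin, arcsinSinDiv]
  ring

lemma hasDerivAt_cos_mul_cos_arcsinSinDiv (hA : 1 < A) (x : ℝ) :
    HasDerivAt (fun y => cos y * cos (arcsinSinDiv A y))
      (-(sin x * (cos (arcsinSinDiv A x) + cos x ^ 2 / (A ^ 2 * cos (arcsinSinDiv A x))))) x := by
  refine ((hasDerivAt_cos x).mul (hasDerivAt_arcsinSinDiv hA x).cos).congr_deriv ?_
  rw [sin_arcsinSinDiv hA]
  have := (cos_arcsinSinDiv_pos hA x).ne'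
  have : A ≠ 0 := (zero_lt_one.trans hA).ne'
  field_simp
  ring

lemma abs_oscIntegrand_le (hA : 1 < A) (k x : ℝ) : |oscIntegrand A k x| ≤ (1 - A⁻¹ ^ 2)⁻¹ := by
  rw [oscIntegrand, abs_div, abs_sq, div_eq_mul_inv]
  calc |cos (k * arcsinSinDiv A x)| * (cos (arcsinSinDiv A x) ^ 2)⁻¹
      ≤ 1 * (cos (arcsinSinDiv A x) ^ 2)⁻¹ := by gcongr; exact abs_cos_le_one _
    _ ≤ (1 - A⁻¹ ^ 2)⁻¹ := by
      rw [one_mul]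
      exact inv_anti₀ (one_sub_inv_sq_pos hA) (one_sub_inv_sq_le_cos_arcsinSinDiv_sq hA x)

lemma continuous_oscIntegrand (hA : 1 < A) (k : ℝ) : Continuous (oscIntegrand A k) :=
  (continuous_cos.comp (continuous_const.mul continuous_arcsinSinDiv)).div
    ((continuous_cos.comp continuous_arcsinSinDiv).pow 2) fun x =>
      pow_ne_zero 2 (cos_arcsinSinDiv_pos hA x).ne'

lemma oscIntegrand_neg (k x : ℝ) : oscIntegrand A k (-x) = oscIntegrand A k x := by
  rw [oscIntegrand, oscIntegrand, arcsinSinDiv_neg, mul_neg, cos_neg, cos_neg]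

lemma oscIntegrand_eq_mul_deriv (hA : 1 < A) {k x : ℝ} (hk : k ≠ 0) (hx : cos x ≠ 0) :
    oscIntegrand A k x = A / k * (cos x * cos (arcsinSinDiv A x))⁻¹ *
      (cos (k * arcsinSinDiv A x) * (k * (cos x / (A * cos (arcsinSinDiv A x))))) := by
  have := (cos_arcsinSinDiv_pos hA x).ne'
  have : A ≠ 0 := (zero_lt_one.trans hA).ne'
  rw [oscIntegrand]
  field_simp

lemma abs_integral_zero_oscIntegrand_le (hA : 1 < A) {k c : ℝ} (hk : 0 < k) (hc0 : 0 ≤ c)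
    (hc : c < π / 2) :
    |∫ x in 0..c, oscIntegrand A k x| ≤ 2 * (A / k * (cos c * cos (arcsinSinDiv A c))⁻¹) := by
  have hcos : ∀ x ∈ Icc 0 c, 0 < cos x := fun x hx =>
    cos_pos_of_mem_Ioo ⟨by linarith [hx.1, pi_pos], by linarith [hx.2]⟩
  have hD : ∀ x ∈ Icc 0 c, 0 < cos x * cos (arcsinSinDiv A x) := fun x hx =>
    mul_pos (hcos x hx) (cos_arcsinSinDiv_pos hA x)
  have hu : ∀ x ∈ Icc 0 c, HasDerivAt (fun y => A / k * (cos y * cos (arcsinSinDiv A y))⁻¹)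
      (A / k * (-(-(sin x * (cos (arcsinSinDiv A x) +
        cos x ^ 2 / (A ^ 2 * cos (arcsinSinDiv A x))))) /
          (cos x * cos (arcsinSinDiv A x)) ^ 2)) x := fun x hx =>
    ((hasDerivAt_cos_mul_cos_arcsinSinDiv hA x).inv (hD x hx).ne').const_mul _
  have hv : ∀ x, HasDerivAt (fun y => sin (k * arcsinSinDiv A y))
      (cos (k * arcsinSinDiv A x) * (k * (cos x / (A * cos (arcsinSinDiv A x))))) x :=
    fun x => ((hasDerivAt_arcsinSinDiv hA x).const_mul k).sin
  have hv' : Continuous fun x =>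
      cos (k * arcsinSinDiv A x) * (k * (cos x / (A * cos (arcsinSinDiv A x)))) :=
    (continuous_cos.comp (continuous_const.mul continuous_arcsinSinDiv)).mul
      (continuous_const.mul (continuous_cos.div
        (continuous_const.mul (continuous_cos.comp continuous_arcsinSinDiv)) fun x =>
          (mul_pos (zero_lt_one.trans hA) (cos_arcsinSinDiv_pos hA x)).ne'))
  rw [integral_congr fun x hx => oscIntegrand_eq_mul_deriv hA hk.ne'
    (hcos x (by rwa [uIcc_of_le hc0] at hx)).ne']
  refine abs_integral_mul_deriv_le_of_deriv_nonneg hc0 (HasDerivAt.continuousOn hu)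
    (continuous_sin.comp (continuous_const.mul continuous_arcsinSinDiv)).continuousOn
    (fun x hx => hu x (Ioo_subset_Icc_self hx)) (fun x _ => hv x) (fun x hx => ?_)
    (hv'.intervalIntegrable _ _) (fun x _ => abs_sin_le_one _)
    (mul_nonneg (by positivity) (inv_nonneg.2 (hD 0 (left_mem_Icc.2 hc0)).le))
  have hsin : 0 ≤ sin x := sin_nonneg_of_nonneg_of_le_pi hx.1.le (by linarith [hx.2, pi_pos])
  have hψ := cos_arcsinSinDiv_pos hA x
  rw [neg_neg]
  exact mul_nonneg (by positivity) (div_nonneg (mul_nonneg hsin (add_nonneg hψ.le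
    (div_nonneg (sq_nonneg _) (mul_nonneg (sq_nonneg _) hψ.le)))) (sq_nonneg _))

lemma abs_integral_oscIntegrand_le_mul (hA : 1 < A) (k a b : ℝ) :
    |∫ x in a..b, oscIntegrand A k x| ≤ (1 - A⁻¹ ^ 2)⁻¹ * |b - a| :=
  norm_integral_le_of_norm_le_const (f := oscIntegrand A k) fun x _ => abs_oscIntegrand_le hA k x

lemma abs_integral_oscIntegrand_le_of_cutoff (hA : 1 < A) {k δ : ℝ} (hk : 0 < k) (hδ : 0 < δ)
    (hδπ : δ ≤ π / 2) :
    |∫ x in 0..π / 2, oscIntegrand A k x| ≤ (π * A / (k * δ) + δ) / (1 - A⁻¹ ^ 2) := by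
  have hκ := one_sub_inv_sq_pos hA
  have hcos : 2 / π * δ ≤ cos (π / 2 - δ) := by
    rw [cos_pi_div_two_sub]; exact mul_le_sin hδ.le hδπ
  have hD : 2 / π * δ * (1 - A⁻¹ ^ 2) ≤ cos (π / 2 - δ) * cos (arcsinSinDiv A (π / 2 - δ)) :=
    mul_le_mul hcos (one_sub_inv_sq_le_cos_arcsinSinDiv hA _) hκ.le
      (hcos.trans' (by positivity))
  have hint a b := (continuous_oscIntegrand hA k).intervalIntegrable (μ := volume) a b
  have hhead := abs_integral_zero_oscIntegrand_le hA hk (c := π / 2 - δ) (by linarith) (by linarith)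
  have htail := abs_integral_oscIntegrand_le_mul hA k (π / 2 - δ) (π / 2)
  rw [← integral_add_adjacent_intervals (hint 0 (π / 2 - δ)) (hint (π / 2 - δ) (π / 2))]
  calc _ ≤ _ := abs_add_le _ _
    _ ≤ 2 * (A / k * (2 / π * δ * (1 - A⁻¹ ^ 2))⁻¹) + (1 - A⁻¹ ^ 2)⁻¹ * δ := by
      refine add_le_add (hhead.trans ?_) (htail.trans_eq (by rw [sub_sub_cancel, abs_of_pos hδ]))
      gcongr
    _ = (π * A / (k * δ) + δ) / (1 - A⁻¹ ^ 2) := by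
      field_simp

lemma abs_integral_oscIntegrand_le_inv_sqrt (hA : 1 < A) {k : ℝ} (hk : 1 ≤ k) :
    |∫ x in 0..π / 2, oscIntegrand A k x| ≤ (π * A + 1) / (1 - A⁻¹ ^ 2) / √k := by
  have hsqrt : 1 ≤ √k := one_le_sqrt.2 hk
  have hδ : (√k)⁻¹ ≤ π / 2 := (inv_le_one_of_one_le₀ hsqrt).trans (by linarith [pi_gt_three])
  refine (abs_integral_oscIntegrand_le_of_cutoff hA (by linarith) (by positivity) hδ).trans_eq ?_
  field_simp
  rw [sq_sqrt (zero_le_one.trans hk)]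
  ring

lemma abs_integral_oscIntegrand_le_rpow (hA : 1 < A) {k : ℝ} (hk : 0 < k) :
    |∫ x in 0..π / 2, oscIntegrand A k x| ≤
      (π * A + π + 1) / (1 - A⁻¹ ^ 2) * k ^ (-(1 / 3) : ℝ) := by
  have hκ := one_sub_inv_sq_pos hA
  rcases le_or_gt 1 k with hk1 | hk1
  · have hrpow : (√k)⁻¹ ≤ k ^ (-(1 / 3) : ℝ) := by
      rw [sqrt_eq_rpow, ← rpow_neg hk.le]
      exact rpow_le_rpow_of_exponent_le hk1 (by norm_num)
    calc _ ≤ (π * A + 1) / (1 - A⁻¹ ^ 2) / √k := abs_integral_oscIntegrand_le_inv_sqrt hA hk1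
      _ ≤ (π * A + π + 1) / (1 - A⁻¹ ^ 2) * k ^ (-(1 / 3) : ℝ) := by
        rw [div_eq_mul_inv _ √k]
        gcongr
        linarith [pi_pos]
  · have hrpow : 1 ≤ k ^ (-(1 / 3) : ℝ) :=
      one_le_rpow_of_pos_of_le_one_of_nonpos hk hk1.le (by norm_num)
    calc _ ≤ (1 - A⁻¹ ^ 2)⁻¹ * |π / 2 - 0| := abs_integral_oscIntegrand_le_mul hA k 0 (π / 2)
      _ ≤ (π * A + π + 1) / (1 - A⁻¹ ^ 2) * 1 := by
        rw [sub_zero, abs_of_pos (by positivity), mul_one, inv_mul_eq_div]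
        gcongr
        nlinarith [pi_pos]
      _ ≤ _ := by gcongr

end arcsinSinDiv

lemma integral_omg_eq {m ε : ℝ} (hm : 0 < m) (hε : 0 < ε) (t : ℝ) :
    ∫ p in -(π / (4 * ε))..π / (4 * ε), cos (2 * omg m ε p * t) / cos (2 * omg m ε p * ε) ^ 2
      = ε⁻¹ * ∫ x in 0..π / 2, oscIntegrand (1 + m ^ 2 * ε ^ 2) (t / ε) x := by
  have hA : 1 < 1 + m ^ 2 * ε ^ 2 := lt_add_of_pos_right 1 (by positivity)
  have homg (p s : ℝ) :
      2 * omg m ε p * s = s / ε * arcsinSinDiv (1 + m ^ 2 * ε ^ 2) (2 * ε * p) := by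
    rw [omg, arcsinSinDiv, mul_right_comm 2 ε p]
    field_simp
  have hintegrand (p : ℝ) : cos (2 * omg m ε p * t) / cos (2 * omg m ε p * ε) ^ 2 =
      oscIntegrand (1 + m ^ 2 * ε ^ 2) (t / ε) (2 * ε * p) := by
    rw [homg, homg, div_self hε.ne', one_mul, oscIntegrand]
  have hbound : 2 * ε * (π / (4 * ε)) = π / 2 := by field_simp; ring
  simp_rw [hintegrand]
  rw [integral_comp_mul_left (fun x => oscIntegrand (1 + m ^ 2 * ε ^ 2) (t / ε) x)
    (mul_ne_zero two_ne_zero hε.ne'), mul_neg, hbound,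
    integral_symmetric_eq_two_mul_of_even (oscIntegrand_neg _)
      ((continuous_oscIntegrand hA _).intervalIntegrable _ _), smul_eq_mul]
  ring

/-- Lemma (stationary-phase type estimate for the oscillatory integral). -/
theorem oscillatory_integral_estimate (m ε : ℝ) (hm : 0 < m) (hε : 0 < ε) :
    ∃ C : ℝ, 0 < C ∧ ∀ t : ℝ, 0 < t →
      |∫ p in (-(Real.pi / (4 * ε)))..(Real.pi / (4 * ε)),
          Real.cos (2 * omg m ε p * t) / (Real.cos (2 * omg m ε p * ε)) ^ 2|
        ≤ C * t ^ (-(1 / 3) : ℝ) := by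
  set A := 1 + m ^ 2 * ε ^ 2
  have hA : 1 < A := lt_add_of_pos_right 1 (by positivity)
  have hκ := one_sub_inv_sq_pos hA
  refine ⟨ε⁻¹ * ((π * A + π + 1) / (1 - A⁻¹ ^ 2)) / ε ^ (-(1 / 3) : ℝ), by positivity,
    fun t ht => ?_⟩
  rw [integral_omg_eq hm hε, abs_mul, abs_of_pos (inv_pos.2 hε)]
  calc _ ≤ ε⁻¹ * ((π * A + π + 1) / (1 - A⁻¹ ^ 2) * (t / ε) ^ (-(1 / 3) : ℝ)) := by
        gcongr
        exact abs_integral_oscIntegrand_le_rpow hA (div_pos ht hε)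
    _ = _ := by rw [div_rpow ht.le hε.le]; ring
end

section
/- Let m > 0 and let x, t be real numbers with |x| < t. Then for every ε with 0 < ε ≤ min{ 8/(m²(x+t)), (x+t)/4, (t−x)/4 }, setting A := ⌊x/(4ε)⌋ + ⌊t/(4ε)⌋ and B := ⌊t/(4ε)⌋ − ⌊x/(4ε)⌋, for every integer j ≥ 0 one has C(A−1, j)·C(B−1, j)·(2+(mε)²)^j·(mε)^{2j} ≤ (x+t)^j·(t−x)^j·m^{2j} / (2^{3j}·(j!)²). -/
open scoped BigOperators

/-!
Bound each binomial coefficient by `C(n, j) ≤ nʲ / j!`, with `A - 1 ≤ (x + t)/(4ε) - 1` and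
`B - 1 ≤ (t - x)/(4ε)` from the floor bounds. The `j`-th powers then collect into a single base,
and the smallness condition `m²(x + t)ε ≤ 8` is exactly what absorbs the factor `2 + (mε)²`:
`((x + t)/(4ε) - 1)(2 + (mε)²) ≤ (x + t)/(2ε)`.
-/

open Nat

lemma zchoose_le_pow_div (a : ℤ) (j : ℕ) {r : ℝ} (ha : (a : ℝ) ≤ r) (hr : 0 ≤ r) :
    (zchoose a j : ℝ) ≤ r ^ j / j ! := by
  unfold zchoose
  split_ifs with h
  · have hcast : ((a.toNat : ℕ) : ℝ) = a := by exact_mod_cast Int.toNat_of_nonneg h.1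
    calc ((a.toNat.choose (j : ℤ).toNat : ℕ) : ℝ)
        ≤ (a.toNat : ℝ) ^ j / j ! := by simpa using Nat.choose_le_pow_div j a.toNat
      _ ≤ r ^ j / j ! := by rw [hcast]; gcongr; exact_mod_cast h.1
  · push_cast
    positivity

lemma zchoose_nonneg (a b : ℤ) : 0 ≤ zchoose a b := by
  unfold zchoose
  split_ifs <;> positivity

lemma zchoose_mul_zchoose_mul_pow_le {a b : ℤ} {r s p K : ℝ} (j : ℕ)
    (ha : (a : ℝ) ≤ r) (hr : 0 ≤ r) (hb : (b : ℝ) ≤ s) (hs : 0 ≤ s) (hp : 0 ≤ p)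
    (hK : r * s * p ≤ K) :
    (zchoose a j : ℝ) * zchoose b j * p ^ j ≤ K ^ j / (j ! : ℝ) ^ 2 :=
  calc (zchoose a j : ℝ) * zchoose b j * p ^ j ≤ r ^ j / j ! * (s ^ j / j !) * p ^ j := by
        gcongr
        · exact_mod_cast zchoose_nonneg _ _
        · exact zchoose_le_pow_div a j ha hr
        · exact zchoose_le_pow_div b j hb hs
    _ = (r * s * p) ^ j / (j ! : ℝ) ^ 2 := by rw [mul_pow, mul_pow]; ring
    _ ≤ K ^ j / (j ! : ℝ) ^ 2 := by gcongr

lemma sub_one_mul_two_add_le {c q : ℝ} (hq : 0 ≤ q) (h : c * q ≤ 2) :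
    (c - 1) * (2 + q) ≤ 2 * c := by
  nlinarith

lemma light_cone_product_le {m x t ε : ℝ} (hε : 0 < ε) (hxt : x ≤ t)
    (hsmall : ε * (m ^ 2 * (x + t)) ≤ 8) :
    ((x + t) / (4 * ε) - 1) * ((t - x) / (4 * ε)) * ((2 + (m * ε) ^ 2) * (m * ε) ^ 2)
      ≤ (x + t) * (t - x) * m ^ 2 / 8 := by
  have habsorb : ((x + t) / (4 * ε) - 1) * (2 + (m * ε) ^ 2) ≤ 2 * ((x + t) / (4 * ε)) := by
    refine sub_one_mul_two_add_le (by positivity) ?_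
    rw [div_mul_eq_mul_div, div_le_iff₀ (by positivity)]
    nlinarith
  have hs : 0 ≤ (t - x) / (4 * ε) * (m * ε) ^ 2 :=
    mul_nonneg (div_nonneg (by linarith) (by positivity)) (sq_nonneg _)
  calc ((x + t) / (4 * ε) - 1) * ((t - x) / (4 * ε)) * ((2 + (m * ε) ^ 2) * (m * ε) ^ 2)
      = ((x + t) / (4 * ε) - 1) * (2 + (m * ε) ^ 2) * ((t - x) / (4 * ε) * (m * ε) ^ 2) := by
        ring
    _ ≤ 2 * ((x + t) / (4 * ε)) * ((t - x) / (4 * ε) * (m * ε) ^ 2) := by gcongr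
    _ = (x + t) * (t - x) * m ^ 2 / 8 := by field_simp; ring

theorem binomial_product_bound_general (m x t : ℝ) :
    ∀ ε : ℝ, 0 < ε →
      ε ≤ min (min (8 / (m ^ 2 * (x + t))) ((x + t) / 4)) ((t - x) / 4) →
      ∀ j : ℕ,
        (zchoose (⌊x / (4 * ε)⌋ + ⌊t / (4 * ε)⌋ - 1) (j : ℤ) : ℝ)
            * (zchoose (⌊t / (4 * ε)⌋ - ⌊x / (4 * ε)⌋ - 1) (j : ℤ) : ℝ)
            * (2 + (m * ε) ^ 2) ^ j * (m * ε) ^ (2 * j)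
          ≤ (x + t) ^ j * (t - x) ^ j * m ^ (2 * j)
            / (2 ^ (3 * j) * ((j.factorial : ℝ)) ^ 2) := by
  intro ε hε hεle j
  simp only [le_min_iff] at hεle
  obtain ⟨⟨hεm, hεplus⟩, hεminus⟩ := hεle
  have h4ε : 0 < 4 * ε := by positivity
  have hA : ((⌊x / (4 * ε)⌋ + ⌊t / (4 * ε)⌋ - 1 : ℤ) : ℝ) ≤ (x + t) / (4 * ε) - 1 := by
    push_cast; linarith [Int.floor_le (x / (4 * ε)), Int.floor_le (t / (4 * ε)), add_div x t (4 * ε)]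
  have hB : ((⌊t / (4 * ε)⌋ - ⌊x / (4 * ε)⌋ - 1 : ℤ) : ℝ) ≤ (t - x) / (4 * ε) := by
    push_cast
    linarith [Int.floor_le (t / (4 * ε)), Int.sub_one_lt_floor (x / (4 * ε)), sub_div t x (4 * ε)]
  have hr : 0 ≤ (x + t) / (4 * ε) - 1 := by rw [sub_nonneg, le_div_iff₀ h4ε]; linarith
  have hs : 0 ≤ (t - x) / (4 * ε) := div_nonneg (by linarith) h4ε.le
  have hsmall : ε * (m ^ 2 * (x + t)) ≤ 8 :=
    mul_le_of_le_div₀ (by norm_num) (mul_nonneg (sq_nonneg m) (by linarith)) hεm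
  calc _ = (zchoose (⌊x / (4 * ε)⌋ + ⌊t / (4 * ε)⌋ - 1) j : ℝ)
        * (zchoose (⌊t / (4 * ε)⌋ - ⌊x / (4 * ε)⌋ - 1) j : ℝ)
        * ((2 + (m * ε) ^ 2) * (m * ε) ^ 2) ^ j := by rw [pow_mul, mul_assoc _ (_ ^ j), ← mul_pow]
    _ ≤ ((x + t) * (t - x) * m ^ 2 / 8) ^ j / (j ! : ℝ) ^ 2 :=
        zchoose_mul_zchoose_mul_pow_le j hA hr hB hs (by positivity)
          (light_cone_product_le hε (by linarith) hsmall)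
    _ = _ := by rw [div_pow, mul_pow, mul_pow, ← pow_mul, pow_mul (2 : ℝ) 3 j]; ring

/-- Lemma (binomial product bound for small `ε`). -/
theorem binomial_product_bound (m x t : ℝ) (hm : 0 < m) (hxt : |x| < t) :
    ∀ ε : ℝ, 0 < ε →
      ε ≤ min (min (8 / (m ^ 2 * (x + t))) ((x + t) / 4)) ((t - x) / 4) →
      ∀ j : ℕ,
        (zchoose (⌊x / (4 * ε)⌋ + ⌊t / (4 * ε)⌋ - 1) (j : ℤ) : ℝ)
            * (zchoose (⌊t / (4 * ε)⌋ - ⌊x / (4 * ε)⌋ - 1) (j : ℤ) : ℝ)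
            * (2 + (m * ε) ^ 2) ^ j * (m * ε) ^ (2 * j)
          ≤ (x + t) ^ j * (t - x) ^ j * m ^ (2 * j)
            / (2 ^ (3 * j) * ((j.factorial : ℝ)) ^ 2) :=
  binomial_product_bound_general m x t
end
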